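/- Let h : ℝⁿ → ℝ be a harmonic polynomial of degree d ≥ 1, x ∈ Σ_h, and write h(y) = h_d^{(x)}(y−x) + ⋯ + h_j^{(x)}(y−x) with h_j^{(x)} ≠ 0 the lowest nonzero homogeneous part. Then the unique geometric blow-up of Σ_h at x is Σ_{h_j^{(x)}}: for every sequence r_i ↓ 0 and every s > 0, the Hausdorff distance between ((Σ_h − x)/r_i) ∩ B(0,s) and Σ_{h_j^{(x)}} ∩ B(0,s) tends to 0. -/

import Mathlib

open MvPolynomial Metric Filter
open scoped ENNReal

/-- Evaluate a multivariate polynomial at a point of Euclidean space. -/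
noncomputable def evalPt {n : ℕ} (p : MvPolynomial (Fin n) ℝ)
    (y : EuclideanSpace ℝ (Fin n)) : ℝ :=
  MvPolynomial.eval (fun i => y i) p

/-- The zero set of a polynomial. -/
def zeroSet {n : ℕ} (p : MvPolynomial (Fin n) ℝ) : Set (EuclideanSpace ℝ (Fin n)) :=
  {y | evalPt p y = 0}

/-- The polynomial y ↦ p(y + x). -/
noncomputable def translatePoly {n : ℕ} (p : MvPolynomial (Fin n) ℝ)
    (x : EuclideanSpace ℝ (Fin n)) : MvPolynomial (Fin n) ℝ :=
  MvPolynomial.bind₁ (fun i => MvPolynomial.X i + MvPolynomial.C (x i)) p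

/-- The homogeneous part of degree `k` of `p` centered at `x`. -/
noncomputable def homPart {n : ℕ} (p : MvPolynomial (Fin n) ℝ)
    (x : EuclideanSpace ℝ (Fin n)) (k : ℕ) : MvPolynomial (Fin n) ℝ :=
  MvPolynomial.homogeneousComponent k (translatePoly p x)

/-- The sup norm of |q| on the closed ball B(0,r), as an extended nonnegative real. -/
noncomputable def supNormBall {n : ℕ} (q : MvPolynomial (Fin n) ℝ) (r : ℝ) : ℝ≥0∞ :=
  ⨆ y ∈ Metric.closedBall (0 : EuclideanSpace ℝ (Fin n)) r, ENNReal.ofReal |evalPt q y|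

/-- ζ_k(p,x,r): the relative size of the homogeneous part of degree k of a polynomial of
degree d, centered at x, on the ball of radius r. -/
noncomputable def zeta {n : ℕ} (d : ℕ) (p : MvPolynomial (Fin n) ℝ)
    (x : EuclideanSpace ℝ (Fin n)) (k : ℕ) (r : ℝ) : ℝ≥0∞ :=
  ⨆ j ∈ (Finset.range (d + 1)).erase k,
    supNormBall (homPart p x j) r / supNormBall (homPart p x k) r

/-- A polynomial is harmonic if its Laplacian vanishes. -/
def IsHarmonic {n : ℕ} (p : MvPolynomial (Fin n) ℝ) : Prop :=
  ∑ i : Fin n, MvPolynomial.pderiv i (MvPolynomial.pderiv i p) = 0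

/-- The local flatness θ_Σ(x,r): the normalized minimal Hausdorff distance between
Σ ∩ B(x,r) and (x + L) ∩ B(x,r) over hyperplanes L through the origin. -/
noncomputable def flatness {n : ℕ} (A : Set (EuclideanSpace ℝ (Fin n)))
    (x : EuclideanSpace ℝ (Fin n)) (r : ℝ) : ℝ :=
  (1 / r) * ⨅ L : {L : Submodule ℝ (EuclideanSpace ℝ (Fin n)) // Module.finrank ℝ L = n - 1},
    Metric.hausdorffDist (A ∩ Metric.closedBall x r)
      (((fun y => x + y) '' (L.1 : Set (EuclideanSpace ℝ (Fin n)))) ∩ Metric.closedBall x r)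

/-- Dp(x) ≠ 0 : some partial derivative of p is nonzero at x. -/
def gradNeZero {n : ℕ} (p : MvPolynomial (Fin n) ℝ) (x : EuclideanSpace ℝ (Fin n)) : Prop :=
  ∃ i : Fin n, MvPolynomial.eval (fun j => x j) (MvPolynomial.pderiv i p) ≠ 0

/-- Sup of |h| on the unit sphere. -/
noncomputable def sphereSup {n : ℕ} (h : MvPolynomial (Fin n) ℝ) : ℝ :=
  sSup ((fun θ => |evalPt h θ|) '' Metric.sphere (0 : EuclideanSpace ℝ (Fin n)) 1)

/-- The polynomial y ↦ p(t·y). -/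
noncomputable def dilatePoly {n : ℕ} (p : MvPolynomial (Fin n) ℝ) (t : ℝ) :
    MvPolynomial (Fin n) ℝ :=
  MvPolynomial.bind₁ (fun i => MvPolynomial.C t * MvPolynomial.X i) p

/-!
Put `x` at the origin and write `h(x + t z) = tʲ F_t(z)` with `F_t = Σₗ tˡ h_{j+l}^{(x)}`, so that
`(Σ_h - x)/t = {F_t = 0}` and `F_t → h_j^{(x)} =: P` uniformly on compact sets as `t → 0`.
Zero sets of uniformly convergent continuous functions converge in the Hausdorff sense to the zero
set of the limit as soon as the limit changes sign at each of its zeros; since `{P = 0}` is a cone,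
zeros on the boundary sphere can be pushed into the open ball first.

A nonzero harmonic polynomial changes sign at each of its zeros: were it `≥ 0` near a zero, its
lowest-order part there, a limit of rescalings, would be a nonnegative harmonic homogeneous
polynomial `u` of degree `m ≥ 1`. Under the Gaussian weight, integration by parts turns `yᵢ` into
`∂ᵢ`, so Euler's identity `Σ yᵢ ∂ᵢ u = m u` integrates to `m ∫ u = ∫ Δu = 0`, forcing `u = 0`.
-/

open Topology MeasureTheory

section ZeroSets

theorem IsCompact.eventually_forall_of_forall_eventually_prod {X ι : Type*} [TopologicalSpace X]
    {K : Set X} (hK : IsCompact K) {l : Filter ι} {R : ι → X → Prop}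
    (hR : ∀ x ∈ K, ∀ᶠ q in l ×ˢ 𝓝 x, q.2 ∈ K → R q.1 q.2) : ∀ᶠ i in l, ∀ x ∈ K, R i x :=
  Eventually.curry (p := fun q : ι × X ↦ q.2 ∈ K → R q.1 q.2) (hK.mem_prod_nhdsSet_of_forall hR)
    |>.mono fun _ h x hx ↦ h.self_of_nhdsSet x hx hx

theorem Continuous.tendstoUniformlyOn {α β γ : Type*} [UniformSpace α]
    [WeaklyLocallyCompactSpace α] [UniformSpace β] [UniformSpace γ] {F : α → β → γ}
    (hF : Continuous ↿F) {K : Set β} (hK : IsCompact K) (x : α) :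
    TendstoUniformlyOn F (F x) (𝓝 x) K := by
  obtain ⟨C, hC, hxC⟩ := exists_compact_mem_nhds x
  have := ((hC.prod hK).uniformContinuousOn_of_continuous hF.continuousOn).tendstoUniformlyOn
    (mem_of_mem_nhds hxC)
  rwa [nhdsWithin_eq_nhds.mpr hxC] at this

variable {E : Type*} [NormedAddCommGroup E]

theorem StarConvex.inter_closedBall_subset_closure [NormedSpace ℝ E] {Z : Set E}
    (hZ : StarConvex ℝ 0 Z) {s : ℝ} (hs : 0 < s) : Z ∩ closedBall 0 s ⊆ closure (Z ∩ ball 0 s) := by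
  rintro p ⟨hpZ, hps⟩
  have hlim : Tendsto (fun c : ℝ ↦ c • p) (𝓝[<] 1) (𝓝 p) := by
    refine (Continuous.tendsto' ?_ (1 : ℝ) p (one_smul ℝ p)).mono_left nhdsWithin_le_nhds
    fun_prop
  refine mem_closure_of_tendsto hlim ?_
  filter_upwards [Ioo_mem_nhdsLT (show (0 : ℝ) < 1 by norm_num)] with c hc
  refine ⟨hZ.smul_mem hpZ hc.1.le hc.2.le, ?_⟩
  rw [mem_ball_zero_iff, norm_smul, Real.norm_of_nonneg hc.1.le]
  rw [mem_closedBall_zero_iff] at hps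
  nlinarith [hc.1, hc.2]

variable [ProperSpace E] {ι : Type*} {l : Filter ι} {F : ι → E → ℝ} {P : E → ℝ} {s : ℝ}

theorem eventually_zeros_near_limit_zeros (hP : Continuous P)
    (hF : TendstoUniformlyOn F P l (closedBall 0 s)) {η : ℝ} (hη : 0 < η) :
    ∀ᶠ i in l, ∀ z ∈ closedBall (0 : E) s, F i z = 0 →
      ∃ w ∈ {w | P w = 0} ∩ closedBall 0 s, dist z w < η := by
  refine (isCompact_closedBall 0 s).eventually_forall_of_forall_eventually_prod fun z₀ hz₀ ↦ ?_
  by_cases hPz₀ : P z₀ = 0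
  · filter_upwards [Eventually.prod_inr (ball_mem_nhds z₀ hη) l] with q hq _ _
    exact ⟨z₀, ⟨hPz₀, hz₀⟩, hq⟩
  -- near `z₀` the limit `P` is bounded away from zero, hence so is `F i` for large `i`
  have hδ : 0 < |P z₀| / 2 := by positivity
  filter_upwards [(Metric.tendstoUniformlyOn_iff.1 hF _ hδ).prod_mk
    (hP.continuousAt.eventually (ball_mem_nhds (P z₀) hδ))] with q ⟨hFP, hPP⟩ hqs hq0
  have h1 := hFP q.2 hqs
  rw [hq0, Real.dist_eq, sub_zero] at h1
  rw [Real.dist_eq] at hPP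
  have := abs_sub_abs_le_abs_sub (P z₀) (P q.2)
  rw [abs_sub_comm] at this
  linarith

theorem eventually_limit_zeros_near_zeros [NormedSpace ℝ E] (hs : 0 < s) (hP : Continuous P)
    (hFc : ∀ i, Continuous (F i)) (hF : TendstoUniformlyOn F P l (closedBall 0 s))
    (hstar : StarConvex ℝ 0 {z | P z = 0})
    (hsign : ∀ z, P z = 0 → z ∈ closure {a | 0 < P a} ∧ z ∈ closure {b | P b < 0})
    {η : ℝ} (hη : 0 < η) :
    ∀ᶠ i in l, ∀ p ∈ {p | P p = 0} ∩ closedBall (0 : E) s,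
      ∃ z ∈ {z | F i z = 0} ∩ closedBall 0 s, dist p z < η := by
  have hK : IsCompact ({p | P p = 0} ∩ closedBall (0 : E) s) :=
    (isCompact_closedBall 0 s).inter_left (isClosed_eq hP continuous_const)
  refine hK.eventually_forall_of_forall_eventually_prod fun p₀ hp₀ ↦ ?_
  obtain ⟨q, ⟨hqZ, hqs⟩, hpq⟩ := Metric.mem_closure_iff.1
    (hstar.inter_closedBall_subset_closure hs hp₀) (η / 3) (by positivity)
  set ρ := min (η / 3) (s - ‖q‖)
  have hρ : 0 < ρ := lt_min (by positivity) (by rw [mem_ball_zero_iff] at hqs; linarith)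
  have hρs : ball q ρ ⊆ closedBall 0 s := (ball_subset_ball' <| by
    rw [dist_zero_right]; linarith [min_le_right (η / 3) (s - ‖q‖)]).trans ball_subset_closedBall
  obtain ⟨a, ha, hqa⟩ := Metric.mem_closure_iff.1 (hsign q hqZ).1 ρ hρ
  obtain ⟨b, hb, hqb⟩ := Metric.mem_closure_iff.1 (hsign q hqZ).2 ρ hρ
  have haρ : a ∈ ball q ρ := mem_ball_comm.1 hqa
  have hbρ : b ∈ ball q ρ := mem_ball_comm.1 hqb
  have hδ : 0 < min (P a) (-P b) := lt_min ha (neg_pos.2 hb)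
  filter_upwards [(Metric.tendstoUniformlyOn_iff.1 hF _ hδ).prod_mk
    (ball_mem_nhds p₀ (show 0 < η / 3 by positivity))] with x ⟨hFP, hp⟩ _
  have hFa := hFP a (hρs haρ)
  have hFb := hFP b (hρs hbρ)
  rw [Real.dist_eq, abs_lt] at hFa hFb
  obtain ⟨z, hz, hFz⟩ := (convex_ball q ρ).isPreconnected.intermediate_value₂ hbρ haρ
    (hFc x.1).continuousOn continuousOn_const
    (show F x.1 b ≤ 0 by linarith [min_le_right (P a) (-P b)])
    (show 0 ≤ F x.1 a by linarith [min_le_left (P a) (-P b)])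
  refine ⟨z, ⟨hFz, hρs hz⟩, ?_⟩
  have hqz : dist q z < η / 3 := lt_of_lt_of_le (mem_ball'.1 hz) (min_le_left _ _)
  calc dist x.2 z ≤ dist x.2 p₀ + dist p₀ q + dist q z := dist_triangle4 _ _ _ _
    _ < η := by linarith

theorem tendsto_hausdorffEDist_zeros_inter_closedBall [NormedSpace ℝ E] (hs : 0 < s)
    (hP : Continuous P) (hFc : ∀ i, Continuous (F i))
    (hF : TendstoUniformlyOn F P l (closedBall 0 s)) (hstar : StarConvex ℝ 0 {z | P z = 0})
    (hsign : ∀ z, P z = 0 → z ∈ closure {a | 0 < P a} ∧ z ∈ closure {b | P b < 0}) :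
    Tendsto (fun i ↦ hausdorffEDist ({z | F i z = 0} ∩ closedBall 0 s)
      ({z | P z = 0} ∩ closedBall 0 s)) l (𝓝 0) := by
  refine ENNReal.tendsto_nhds_zero.2 fun ε hε ↦ ?_
  obtain ⟨η, hη0, hη, hηε⟩ := ENNReal.lt_iff_exists_real_btwn.1 hε
  filter_upwards [eventually_zeros_near_limit_zeros hP hF (ENNReal.ofReal_pos.1 hη),
    eventually_limit_zeros_near_zeros hs hP hFc hF hstar hsign (ENNReal.ofReal_pos.1 hη)]
    with i hFP hPF
  refine le_trans (hausdorffEDist_le_of_mem_edist (fun z hz ↦ ?_) fun p hp ↦ ?_) hηε.le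
  · obtain ⟨w, hw, hzw⟩ := hFP z hz.2 hz.1
    exact ⟨w, hw, (edist_le_ofReal hη0).2 hzw.le⟩
  · obtain ⟨z, hz, hpz⟩ := hPF p hp
    exact ⟨z, hz, (edist_le_ofReal hη0).2 hpz.le⟩

end ZeroSets

section GaussianMoments

noncomputable def gaussianMoment (k : ℕ) : ℝ := ∫ t : ℝ, t ^ k * Real.exp (-(1 / 2) * t ^ 2)

theorem integrable_pow_mul_exp_neg_half_sq (k : ℕ) :
    Integrable (fun t : ℝ ↦ t ^ k * Real.exp (-(1 / 2) * t ^ 2)) := by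
  simpa [Real.rpow_natCast] using
    integrable_rpow_mul_exp_neg_mul_sq (b := 1 / 2) (by norm_num) (s := k)
      (neg_one_lt_zero.trans_le k.cast_nonneg)

theorem gaussianMoment_one : gaussianMoment 1 = 0 := by
  have h := integral_neg_eq_self (fun t : ℝ ↦ t ^ 1 * Real.exp (-(1 / 2) * t ^ 2)) volume
  simp only [neg_pow_two, pow_one, neg_mul, integral_neg] at h
  simp only [gaussianMoment, pow_one, neg_mul]
  linarith

theorem gaussianMoment_add_two (k : ℕ) :
    gaussianMoment (k + 2) = (k + 1) * gaussianMoment k := by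
  have hu : ∀ t : ℝ, HasDerivAt (fun t ↦ t ^ (k + 1)) ((k + 1 : ℕ) * t ^ k) t := fun t ↦
    hasDerivAt_pow (k + 1) t
  have hv : ∀ t : ℝ, HasDerivAt (fun t ↦ Real.exp (-(1 / 2) * t ^ 2))
      (-t * Real.exp (-(1 / 2) * t ^ 2)) t := fun t ↦ by
    convert ((hasDerivAt_pow 2 t).const_mul (-(1 / 2) : ℝ)).exp using 1
    push_cast; ring
  have ibp := integral_mul_deriv_eq_deriv_mul_of_integrable (fun t _ ↦ hu t) (fun t _ ↦ hv t)
    (by simpa [Pi.mul_def, pow_succ, mul_assoc, mul_left_comm] using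
      (integrable_pow_mul_exp_neg_half_sq (k + 2)).neg)
    (by simpa [Pi.mul_def, mul_assoc] using
      (integrable_pow_mul_exp_neg_half_sq k).const_mul ((k : ℝ) + 1))
    (integrable_pow_mul_exp_neg_half_sq (k + 1))
  simp only [gaussianMoment, ← integral_const_mul]
  have e1 : ∀ t : ℝ, t ^ (k + 1) * (-t * Real.exp (-(1 / 2) * t ^ 2)) =
      -(t ^ (k + 2) * Real.exp (-(1 / 2) * t ^ 2)) := fun t ↦ by ring
  have e2 : ∀ t : ℝ, (((k + 1 : ℕ) : ℝ) * t ^ k) * Real.exp (-(1 / 2) * t ^ 2) =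
      (k + 1) * (t ^ k * Real.exp (-(1 / 2) * t ^ 2)) := fun t ↦ by push_cast; ring
  simp only [e1, e2, integral_neg, neg_inj] at ibp
  exact ibp

-- At `k = 0` the truncated `k - 1` is harmless: the factor `k` vanishes.
theorem gaussianMoment_succ (k : ℕ) : gaussianMoment (k + 1) = k * gaussianMoment (k - 1) := by
  rcases k with _ | k
  · simp [gaussianMoment_one]
  · simpa using gaussianMoment_add_two k

end GaussianMoments

section GaussianIntegral

variable {n : ℕ}

noncomputable def gaussianWeight (y : Fin n → ℝ) : ℝ := ∏ i, Real.exp (-(1 / 2) * y i ^ 2)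

theorem gaussianWeight_pos (y : Fin n → ℝ) : 0 < gaussianWeight y :=
  Finset.prod_pos fun _ _ ↦ Real.exp_pos _

theorem eval_monomial_mul_gaussianWeight (d : Fin n →₀ ℕ) (a : ℝ) (y : Fin n → ℝ) :
    eval y (monomial d a) * gaussianWeight y =
      a * ∏ i, y i ^ d i * Real.exp (-(1 / 2) * y i ^ 2) := by
  rw [eval_monomial, Finsupp.prod_fintype _ _ fun _ ↦ pow_zero _, gaussianWeight,
    Finset.prod_mul_distrib, mul_assoc]

theorem integrable_eval_mul_gaussianWeight (q : MvPolynomial (Fin n) ℝ) :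
    Integrable (fun y ↦ eval y q * gaussianWeight y) := by
  induction q using MvPolynomial.induction_on' with
  | monomial d a =>
    simp_rw [eval_monomial_mul_gaussianWeight]
    exact (Integrable.fintype_prod fun i ↦ integrable_pow_mul_exp_neg_half_sq (d i)).const_mul a
  | add p q hp hq =>
    refine (hp.add hq).congr (Filter.Eventually.of_forall fun y ↦ ?_)
    simp [add_mul]

noncomputable def gaussianIntegral : MvPolynomial (Fin n) ℝ →+ ℝ where
  toFun q := ∫ y, eval y q * gaussianWeight y
  map_zero' := by simp
  map_add' p q := by
    simp only [map_add, add_mul]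
    exact integral_add (integrable_eval_mul_gaussianWeight p)
      (integrable_eval_mul_gaussianWeight q)

theorem gaussianIntegral_apply (q : MvPolynomial (Fin n) ℝ) :
    gaussianIntegral q = ∫ y, eval y q * gaussianWeight y := rfl

theorem gaussianIntegral_monomial (d : Fin n →₀ ℕ) (a : ℝ) :
    gaussianIntegral (monomial d a) = a * ∏ i, gaussianMoment (d i) := by
  rw [gaussianIntegral_apply]
  simp_rw [eval_monomial_mul_gaussianWeight]
  rw [integral_const_mul, integral_fintype_prod_volume_eq_prod
    (fun i (t : ℝ) ↦ t ^ d i * Real.exp (-(1 / 2) * t ^ 2))]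
  rfl

theorem gaussianIntegral_pderiv (q : MvPolynomial (Fin n) ℝ) (i : Fin n) :
    gaussianIntegral (pderiv i q) = gaussianIntegral (X i * q) := by
  classical
  induction q using MvPolynomial.induction_on' with
  | monomial d a =>
    rw [pderiv_monomial, X, monomial_mul, gaussianIntegral_monomial, gaussianIntegral_monomial,
      Fintype.prod_eq_mul_prod_compl i, Fintype.prod_eq_mul_prod_compl i]
    have hoff : ∏ l ∈ {i}ᶜ, gaussianMoment ((d - Finsupp.single i 1 : Fin n →₀ ℕ) l) =
        ∏ l ∈ {i}ᶜ, gaussianMoment ((Finsupp.single i 1 + d : Fin n →₀ ℕ) l) :=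
      Finset.prod_congr rfl fun l hl ↦ by
        have hli : l ≠ i := by simpa using hl
        simp [Finsupp.single_eq_of_ne hli]
    rw [hoff, Finsupp.tsub_apply, Finsupp.add_apply, Finsupp.single_eq_same, add_comm 1,
      gaussianMoment_succ]
    ring
  | add p q hp hq => simp only [map_add, mul_add, hp, hq]

theorem IsHarmonic.gaussianIntegral_eq_zero {q : MvPolynomial (Fin n) ℝ} {m : ℕ}
    (hharm : IsHarmonic q) (hq : q.IsHomogeneous m) (hm : m ≠ 0) : gaussianIntegral q = 0 := by
  have : m • gaussianIntegral q = 0 := by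
    rw [← map_nsmul, ← hq.sum_X_mul_pderiv, map_sum]
    simp_rw [← gaussianIntegral_pderiv, ← map_sum]
    rw [show (∑ i, pderiv i (pderiv i q)) = 0 from hharm, map_zero]
  simpa [hm] using this

theorem IsHarmonic.eq_zero_of_isHomogeneous_of_nonneg {q : MvPolynomial (Fin n) ℝ} {m : ℕ}
    (hharm : IsHarmonic q) (hq : q.IsHomogeneous m) (hm : m ≠ 0)
    (hnn : ∀ y, 0 ≤ evalPt q y) : q = 0 := by
  have hcont : Continuous (fun y ↦ eval y q * gaussianWeight y) :=
    (continuous_eval q).mul (by unfold gaussianWeight; fun_prop)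
  have hzero : (fun y ↦ eval y q * gaussianWeight y) = 0 :=
    (hcont.ae_eq_iff_eq volume continuous_const).1 <|
      (integral_eq_zero_iff_of_nonneg
        (fun y ↦ mul_nonneg (hnn (WithLp.toLp 2 y)) (gaussianWeight_pos y).le)
        (integrable_eval_mul_gaussianWeight q)).1 (hharm.gaussianIntegral_eq_zero hq hm)
  refine MvPolynomial.funext fun y ↦ ?_
  simpa [(gaussianWeight_pos y).ne'] using congrFun hzero y

end GaussianIntegral

section Polynomials

variable {n : ℕ}

theorem mem_zeroSet {p : MvPolynomial (Fin n) ℝ} {y : EuclideanSpace ℝ (Fin n)} :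
    y ∈ zeroSet p ↔ evalPt p y = 0 := Iff.rfl

theorem continuous_evalPt (p : MvPolynomial (Fin n) ℝ) : Continuous (evalPt p) :=
  (continuous_eval p).comp (PiLp.continuous_ofLp 2 _)

theorem evalPt_translatePoly (p : MvPolynomial (Fin n) ℝ) (x y : EuclideanSpace ℝ (Fin n)) :
    evalPt (translatePoly p x) y = evalPt p (y + x) := by
  change eval₂Hom (RingHom.id ℝ) _ (bind₁ _ p) = _
  rw [eval₂Hom_bind₁]
  simp [evalPt]

theorem homogeneousComponent_zero_translatePoly (p : MvPolynomial (Fin n) ℝ)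
    (x : EuclideanSpace ℝ (Fin n)) :
    homogeneousComponent 0 (translatePoly p x) = C (evalPt p x) := by
  rw [homogeneousComponent_zero, ← constantCoeff_eq, ← eval_zero]
  exact congrArg C ((evalPt_translatePoly p x 0).trans (by rw [zero_add]))

theorem translatePoly_eq_zero_iff {p : MvPolynomial (Fin n) ℝ} {x : EuclideanSpace ℝ (Fin n)} :
    translatePoly p x = 0 ↔ p = 0 := by
  refine ⟨fun h ↦ MvPolynomial.funext fun y ↦ ?_, fun h ↦ by simp [h, translatePoly]⟩
  have := evalPt_translatePoly p x (WithLp.toLp 2 y - x)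
  rw [h, sub_add_cancel] at this
  simpa [evalPt] using this.symm

theorem pderiv_translatePoly (p : MvPolynomial (Fin n) ℝ) (x : EuclideanSpace ℝ (Fin n))
    (i : Fin n) : pderiv i (translatePoly p x) = translatePoly (pderiv i p) x := by
  unfold translatePoly
  induction p using MvPolynomial.induction_on with
  | C a => simp
  | add p q hp hq => simp only [map_add, hp, hq]
  | mul_X p j hp =>
    rw [map_mul, bind₁_X_right, pderiv_mul, hp, pderiv_mul]
    by_cases hij : j = i
    · subst hij
      simp
    · simp [pderiv_X_of_ne hij]

theorem isHarmonic_translatePoly {p : MvPolynomial (Fin n) ℝ} (hp : IsHarmonic p)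
    (x : EuclideanSpace ℝ (Fin n)) : IsHarmonic (translatePoly p x) := by
  unfold IsHarmonic at *
  simp only [pderiv_translatePoly]
  simp only [translatePoly]
  rw [← map_sum, hp, map_zero]

theorem IsHarmonic.neg {p : MvPolynomial (Fin n) ℝ} (hp : IsHarmonic p) : IsHarmonic (-p) := by
  unfold IsHarmonic at *
  simp [hp]

theorem isHarmonic_homogeneousComponent {p : MvPolynomial (Fin n) ℝ} (hp : IsHarmonic p)
    (k : ℕ) : IsHarmonic (homogeneousComponent k p) := by
  unfold IsHarmonic at *
  ext e
  have := congrArg (coeff e) hp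
  simp only [coeff_sum, coeff_pderiv, coeff_homogeneousComponent, coeff_zero,
    map_add, Finsupp.degree_single] at this ⊢
  by_cases hk : e.degree + 1 + 1 = k <;> simp only [hk, if_true, if_false, this, zero_mul,
    Finset.sum_const_zero]

theorem evalPt_smul_of_isHomogeneous {q : MvPolynomial (Fin n) ℝ} {m : ℕ}
    (hq : q.IsHomogeneous m) (c : ℝ) (y : EuclideanSpace ℝ (Fin n)) :
    evalPt q (c • y) = c ^ m * evalPt q y := by
  simp only [evalPt, eval_eq', Finset.mul_sum, PiLp.smul_apply, smul_eq_mul, mul_pow,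
    Finset.prod_mul_distrib, Finset.prod_pow_eq_pow_sum]
  refine Finset.sum_congr rfl fun d hd ↦ ?_
  have hdeg : ∑ i, d i = m := by
    rw [← Finsupp.degree_eq_sum, Finsupp.degree_eq_weight_one]
    exact hq (mem_support_iff.1 hd)
  rw [hdeg]
  ring

theorem evalPt_smul_eq_sum (p : MvPolynomial (Fin n) ℝ) (t : ℝ) (y : EuclideanSpace ℝ (Fin n)) :
    evalPt p (t • y) =
      ∑ k ∈ Finset.range (p.totalDegree + 1), t ^ k * evalPt (homogeneousComponent k p) y := by
  conv_lhs => rw [← sum_homogeneousComponent p]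
  simp only [evalPt, map_sum]
  exact Finset.sum_congr rfl fun k _ ↦
    evalPt_smul_of_isHomogeneous (homogeneousComponent_isHomogeneous k p) t y

/-- `rescale p m t y = t⁻ᵐ p(t • y)` for `t ≠ 0` when `p` has no terms of degree `< m`
(`evalPt_smul_eq_pow_mul_rescale`), written so that it is jointly continuous, also at `t = 0`. -/
noncomputable def rescale (p : MvPolynomial (Fin n) ℝ) (m : ℕ) (t : ℝ)
    (y : EuclideanSpace ℝ (Fin n)) : ℝ :=
  ∑ l ∈ Finset.range (p.totalDegree + 1), t ^ l * evalPt (homogeneousComponent (m + l) p) y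

theorem evalPt_smul_eq_pow_mul_rescale {p : MvPolynomial (Fin n) ℝ} {m : ℕ}
    (hlow : ∀ k < m, homogeneousComponent k p = 0) (t : ℝ) (y : EuclideanSpace ℝ (Fin n)) :
    evalPt p (t • y) = t ^ m * rescale p m t y := by
  set f : ℕ → ℝ := fun k ↦ t ^ k * evalPt (homogeneousComponent k p) y
  have hhigh : ∀ l, f (p.totalDegree + 1 + l) = 0 := fun l ↦ by
    simp [f, evalPt,
      homogeneousComponent_eq_zero _ _ (show p.totalDegree < p.totalDegree + 1 + l by omega)]
  calc evalPt p (t • y) = ∑ k ∈ Finset.range (p.totalDegree + 1 + m), f k := by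
        rw [Finset.sum_range_add, Finset.sum_eq_zero fun l _ ↦ hhigh l, add_zero,
          evalPt_smul_eq_sum]
    _ = ∑ l ∈ Finset.range (p.totalDegree + 1), f (m + l) := by
        rw [add_comm, Finset.sum_range_add,
          Finset.sum_eq_zero fun k hk ↦ by simp [f, hlow k (Finset.mem_range.1 hk), evalPt],
          zero_add]
    _ = t ^ m * rescale p m t y := by
        simp only [f, rescale, Finset.mul_sum, pow_add, mul_assoc]

theorem rescale_zero (p : MvPolynomial (Fin n) ℝ) (m : ℕ) (y : EuclideanSpace ℝ (Fin n)) :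
    rescale p m 0 y = evalPt (homogeneousComponent m p) y := by
  simp [rescale, Finset.sum_range_succ']

theorem continuous_rescale (p : MvPolynomial (Fin n) ℝ) (m : ℕ) :
    Continuous ↿(rescale p m) := by
  have := continuous_evalPt (n := n)
  unfold rescale
  fun_prop

end Polynomials

section SignChange

variable {n : ℕ}

theorem exists_lowest_homogeneousComponent {p : MvPolynomial (Fin n) ℝ} (hp : p ≠ 0) :
    ∃ m, homogeneousComponent m p ≠ 0 ∧ ∀ k < m, homogeneousComponent k p = 0 := by
  classical
  have hex : ∃ m, homogeneousComponent m p ≠ 0 := by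
    by_contra! h
    refine hp ?_
    rw [← sum_homogeneousComponent p]
    exact Finset.sum_eq_zero fun k _ ↦ h k
  exact ⟨Nat.find hex, Nat.find_spec hex, fun k hk ↦ not_not.1 (Nat.find_min hex hk)⟩

theorem IsHarmonic.eq_zero_of_eventually_nonneg {p : MvPolynomial (Fin n) ℝ} (hp : IsHarmonic p)
    {x : EuclideanSpace ℝ (Fin n)} (hx : evalPt p x = 0) (hnn : ∀ᶠ y in 𝓝 x, 0 ≤ evalPt p y) :
    p = 0 := by
  by_contra hp0
  obtain ⟨m, hm, hlow⟩ :=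
    exists_lowest_homogeneousComponent (mt (translatePoly_eq_zero_iff (x := x)).1 hp0)
  have hm0 : m ≠ 0 := by
    rintro rfl
    exact hm (by rw [homogeneousComponent_zero_translatePoly, hx, C_0])
  have hu := isHarmonic_homogeneousComponent (isHarmonic_translatePoly hp x) m
  refine hm (hu.eq_zero_of_isHomogeneous_of_nonneg (homogeneousComponent_isHomogeneous m _) hm0
    fun y ↦ ?_)
  have hlim : Tendsto (fun t ↦ rescale (translatePoly p x) m t y) (𝓝[>] 0)
      (𝓝 (evalPt (homogeneousComponent m (translatePoly p x)) y)) := by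
    rw [← rescale_zero]
    exact ((continuous_rescale _ m).comp (continuous_id.prodMk continuous_const)).tendsto 0
      |>.mono_left nhdsWithin_le_nhds
  have hline : Tendsto (fun t : ℝ ↦ t • y + x) (𝓝[>] 0) (𝓝 x) := by
    refine (Continuous.tendsto' ?_ 0 x (by simp)).mono_left nhdsWithin_le_nhds
    fun_prop
  refine ge_of_tendsto hlim ?_
  filter_upwards [self_mem_nhdsWithin, hline.eventually hnn] with t ht hpt
  rw [← evalPt_translatePoly, evalPt_smul_eq_pow_mul_rescale hlow] at hpt
  exact nonneg_of_mul_nonneg_right hpt (pow_pos ht m)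

theorem IsHarmonic.zeroSet_subset_closure_neg {p : MvPolynomial (Fin n) ℝ} (hp : IsHarmonic p)
    (hp0 : p ≠ 0) : zeroSet p ⊆ closure {y | evalPt p y < 0} := fun x hx ↦ by
  by_contra h
  rw [mem_closure_iff_frequently, not_frequently] at h
  exact hp0 (hp.eq_zero_of_eventually_nonneg hx (h.mono fun y hy ↦ not_lt.1 hy))

theorem IsHarmonic.zeroSet_subset_closure_pos {p : MvPolynomial (Fin n) ℝ} (hp : IsHarmonic p)
    (hp0 : p ≠ 0) : zeroSet p ⊆ closure {y | 0 < evalPt p y} := by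
  have h := hp.neg.zeroSet_subset_closure_neg (neg_ne_zero.2 hp0)
  simpa [zeroSet, evalPt] using h

end SignChange

section BlowUp

variable {n : ℕ}

theorem image_smul_sub_zeroSet {p : MvPolynomial (Fin n) ℝ} {x : EuclideanSpace ℝ (Fin n)}
    {m : ℕ} (hlow : ∀ k < m, homogeneousComponent k (translatePoly p x) = 0) {t : ℝ}
    (ht : t ≠ 0) :
    (fun y ↦ t⁻¹ • (y - x)) '' zeroSet p = {z | rescale (translatePoly p x) m t z = 0} := by
  have key : ∀ z, evalPt p (t • z + x) = t ^ m * rescale (translatePoly p x) m t z := fun z ↦ by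
    rw [← evalPt_smul_eq_pow_mul_rescale hlow, evalPt_translatePoly]
  ext z
  constructor
  · rintro ⟨y, hy, rfl⟩
    have : t • t⁻¹ • (y - x) + x = y := by rw [smul_inv_smul₀ ht, sub_add_cancel]
    rw [← this, mem_zeroSet, key] at hy
    exact (mul_eq_zero.1 hy).resolve_left (pow_ne_zero m ht)
  · intro hz
    refine ⟨t • z + x, ?_, by simp [inv_smul_smul₀ ht]⟩
    rw [mem_zeroSet, key, Set.mem_ofPred.1 hz, mul_zero]

theorem starConvex_zeroSet {q : MvPolynomial (Fin n) ℝ} {m : ℕ} (hq : q.IsHomogeneous m) :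
    StarConvex ℝ 0 (zeroSet q) := fun y hy a b _ _ _ ↦ by
  rw [smul_zero, zero_add, mem_zeroSet, evalPt_smul_of_isHomogeneous hq, mem_zeroSet.1 hy,
    mul_zero]

end BlowUp

theorem zeroSet_blowup_general {n : ℕ} (h : MvPolynomial (Fin n) ℝ) (hharm : IsHarmonic h)
    (x : EuclideanSpace ℝ (Fin n))
    (j : ℕ) (hj : homPart h x j ≠ 0) (hlow : ∀ k < j, homPart h x k = 0)
    (r : ℕ → ℝ) (hr : ∀ i, 0 < r i) (hr0 : Filter.Tendsto r Filter.atTop (nhds 0))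
    (s : ℝ) (hs : 0 < s) :
    Filter.Tendsto (fun i => EMetric.hausdorffEdist
      (((fun y => (r i)⁻¹ • (y - x)) '' zeroSet h) ∩ Metric.closedBall 0 s)
      (zeroSet (homPart h x j) ∩ Metric.closedBall 0 s))
      Filter.atTop (nhds 0) := by
  set T := translatePoly h x
  have hharmP : IsHarmonic (homPart h x j) :=
    isHarmonic_homogeneousComponent (isHarmonic_translatePoly hharm x) j
  have hunif : TendstoUniformlyOn (fun i ↦ rescale T j (r i)) (evalPt (homPart h x j))
      Filter.atTop (Metric.closedBall 0 s) := by
    have := (continuous_rescale T j).tendstoUniformlyOn (isCompact_closedBall 0 s) 0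
    rw [funext (rescale_zero T j)] at this
    exact fun u hu ↦ hr0.eventually (this u hu)
  simp_rw [image_smul_sub_zeroSet hlow (hr _).ne']
  exact tendsto_hausdorffEDist_zeros_inter_closedBall hs (continuous_evalPt _)
    (fun i ↦ (continuous_rescale T j).comp (continuous_const.prodMk continuous_id)) hunif
    (starConvex_zeroSet (homogeneousComponent_isHomogeneous j T))
    fun z hz ↦ ⟨hharmP.zeroSet_subset_closure_pos hj hz, hharmP.zeroSet_subset_closure_neg hj hz⟩

/-- The unique geometric blow-up of the zero set of a harmonic polynomial h at x ∈ Σ_h is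
the zero set of the lowest-order nonzero homogeneous part of h centered at x. -/
theorem zeroSet_blowup {n : ℕ} (h : MvPolynomial (Fin n) ℝ) (d : ℕ) (hd : 1 ≤ d)
    (hdeg : h.totalDegree = d) (hharm : IsHarmonic h)
    (x : EuclideanSpace ℝ (Fin n)) (hx : x ∈ zeroSet h)
    (j : ℕ) (hj : homPart h x j ≠ 0) (hlow : ∀ k < j, homPart h x k = 0)
    (r : ℕ → ℝ) (hr : ∀ i, 0 < r i) (hr0 : Filter.Tendsto r Filter.atTop (nhds 0))
    (s : ℝ) (hs : 0 < s) :
    Filter.Tendsto (fun i => EMetric.hausdorffEdist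
      (((fun y => (r i)⁻¹ • (y - x)) '' zeroSet h) ∩ Metric.closedBall 0 s)
      (zeroSet (homPart h x j) ∩ Metric.closedBall 0 s))
      Filter.atTop (nhds 0) :=
  zeroSet_blowup_general h hharm x j hj hlow r hr hr0 s hs
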